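/- arXiv:2502.16409 — 4 statements merged into one kernel-verified Lean document; each statement's English description precedes it below -/
import Mathlib

section
/- Let κ : S¹ × [0, T) → ℝ be a smooth positive solution of κ_t = (κ² + λ(t))κ_{θθ} − (2λ(t)/κ)κ_θ² + κ³ − λ(t)κ, where λ : [0,T) → ℝ is continuous with 0 < λ(t) ≤ Λ. Then for all t ∈ [0,T), min_θ κ(θ, t) ≥ (min_θ κ(θ, 0))·e^{−(Λ+1)t}. In particular κ stays positive, so convexity is preserved. -/
open Real Set Filter Topology

lemma second_deriv_nonneg_of_isLocalMin {g : ℝ → ℝ} {a : ℝ}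
    (hg : ContDiff ℝ (⊤ : ℕ∞) g) (h : IsLocalMin g a) : 0 ≤ deriv (deriv g) a := by
  by_contra hneg
  push_neg at hneg
  have hd1 : deriv g a = 0 := h.deriv_eq_zero
  have hg0 : ContDiff ℝ ((⊤:ℕ∞):WithTop ℕ∞) g := hg.of_le (by simp)
  have hg1 : ContDiff ℝ ((⊤:ℕ∞):WithTop ℕ∞) (deriv g) := (contDiff_infty_iff_deriv.mp hg0).2
  have hda : HasDerivAt (deriv g) (deriv (deriv g) a) a :=
    (hg1.differentiable (by simp) a).hasDerivAt
  have hslope : Tendsto (slope (deriv g) a) (𝓝[≠] a) (𝓝 (deriv (deriv g) a)) :=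
    hasDerivAt_iff_tendsto_slope.mp hda
  have hlt : ∀ᶠ x in 𝓝[>] a, slope (deriv g) a x < 0 := by
    have := (hslope.mono_left (nhdsWithin_mono a fun x hx => ne_of_gt hx)).eventually
      (eventually_lt_nhds hneg)
    exact this
  have hneg' : ∀ᶠ x in 𝓝[>] a, deriv g x < 0 := by
    filter_upwards [hlt, self_mem_nhdsWithin] with x hx (hxa : a < x)
    rw [slope_def_field, hd1, sub_zero, div_neg_iff] at hx
    rcases hx with ⟨h1, h2⟩ | ⟨h1, h2⟩
    · linarith
    · exact h1
  have hmin : ∀ᶠ x in 𝓝[>] a, g a ≤ g x := h.filter_mono nhdsWithin_le_nhds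
  obtain ⟨u, hu, hsub⟩ := mem_nhdsGT_iff_exists_Ioo_subset.mp (hneg'.and hmin)
  obtain ⟨b, hb⟩ : (Ioo a u).Nonempty := nonempty_Ioo.mpr hu
  have hanti : StrictAntiOn g (Icc a b) := by
    apply strictAntiOn_of_deriv_neg (convex_Icc a b) (hg.continuous.continuousOn)
    intro x hx
    rw [interior_Icc] at hx
    exact (hsub ⟨hx.1, hx.2.trans hb.2⟩).1
  have h1 : g b < g a := hanti ⟨le_rfl, hb.1.le⟩ ⟨hb.1.le, le_rfl⟩ hb.1
  have h2 : g a ≤ g b := (hsub hb).2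
  linarith

theorem stmt_5 (T Λ : ℝ) (hT : 0 < T) (κ : ℝ → ℝ → ℝ) (lam : ℝ → ℝ)
    (hsmooth : ContDiff ℝ (⊤ : ℕ∞) (Function.uncurry κ))
    (hper : ∀ t, Function.Periodic (fun θ => κ θ t) (2 * π))
    (hpos : ∀ θ t, t ∈ Set.Ico (0:ℝ) T → 0 < κ θ t)
    (hlamc : Continuous lam)
    (hlam : ∀ t ∈ Set.Ico (0:ℝ) T, 0 < lam t ∧ lam t ≤ Λ)
    (hPDE : ∀ θ, ∀ t ∈ Set.Ico (0:ℝ) T,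
      deriv (fun s => κ θ s) t =
        (κ θ t ^ 2 + lam t) * deriv (deriv (fun θ' => κ θ' t)) θ
          - (2 * lam t / κ θ t) * (deriv (fun θ' => κ θ' t) θ) ^ 2
          + κ θ t ^ 3 - lam t * κ θ t) :
    ∀ t ∈ Set.Ico (0:ℝ) T, ∀ θ,
      κ θ t ≥ (⨅ θ', κ θ' 0) * Real.exp (-(Λ + 1) * t) := by
  intro t ht θ0
  obtain ⟨ht0, htT⟩ := ht
  have hbdd : BddBelow (Set.range fun θ' => κ θ' 0) := by
    refine ⟨0, ?_⟩
    rintro x ⟨θ', rfl⟩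
    exact (hpos θ' 0 ⟨le_refl 0, hT⟩).le
  set m0 := ⨅ θ', κ θ' 0 with hm0def
  have hm0le : ∀ θ', m0 ≤ κ θ' 0 := fun θ' => ciInf_le hbdd θ'
  have hcont : Continuous fun p : ℝ × ℝ => κ p.1 p.2 := hsmooth.continuous
  have hdiffT : ∀ θ, Differentiable ℝ fun s => κ θ s := by
    intro θ
    exact (hsmooth.differentiable (by simp)).comp
      ((differentiable_const θ).prodMk differentiable_id)
  have hcθ : ∀ s, ContDiff ℝ (⊤ : ℕ∞) fun θ' => κ θ' s := fun s =>
    hsmooth.comp (contDiff_id.prodMk contDiff_const)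
  have key : ∀ ε, 0 < ε → ∀ s ∈ Set.Icc (0:ℝ) t, ∀ θ,
      0 < κ θ s * Real.exp ((Λ+1)*s) + ε*(s+1) - m0 := by
    intro ε hε
    set W : ℝ → ℝ → ℝ := fun θ s => κ θ s * Real.exp ((Λ+1)*s) + ε*(s+1) - m0 with hWdef
    show ∀ s ∈ Set.Icc (0:ℝ) t, ∀ θ, 0 < W θ s
    by_contra hcon
    push_neg at hcon
    obtain ⟨s0, hs0, θr, hθr⟩ := hcon
    have hWc : Continuous fun p : ℝ × ℝ => W p.1 p.2 := by
      simp only [hWdef]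
      exact ((hcont.mul (by fun_prop)).add (by fun_prop)).sub continuous_const
    set S : Set (ℝ × ℝ) :=
      (Set.Icc (0:ℝ) (2*π) ×ˢ Set.Icc (0:ℝ) t) ∩ {p | W p.1 p.2 ≤ 0} with hSdef
    have hScomp : IsCompact S :=
      (isCompact_Icc.prod isCompact_Icc).inter_right (isClosed_le hWc continuous_const)
    obtain ⟨θb, hθb, hθbe⟩ := (hper s0).exists_mem_Ico₀ Real.two_pi_pos θr
    have hSne : ((θb, s0) : ℝ × ℝ) ∈ S := by
      refine ⟨⟨⟨hθb.1, hθb.2.le⟩, hs0⟩, ?_⟩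
      show W θb s0 ≤ 0
      have hrw : κ θr s0 = κ θb s0 := hθbe
      simp only [hWdef] at hθr ⊢
      rw [hrw] at hθr
      exact hθr
    set A : Set ℝ := Prod.snd '' S with hAdef
    have hAcomp : IsCompact A := hScomp.image continuous_snd
    have hAne : A.Nonempty := ⟨s0, ⟨(θb, s0), hSne, rfl⟩⟩
    set t1 := sInf A with ht1def
    have ht1A : t1 ∈ A := hAcomp.sInf_mem hAne
    obtain ⟨⟨θ1, t1'⟩, hpS, hpt⟩ := ht1A
    have hpt' : t1' = t1 := hpt
    subst hpt'
    have hlb : ∀ s' ∈ A, t1 ≤ s' := fun s' hs' => csInf_le hAcomp.bddBelow hs'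
    have ht1mem : t1 ∈ Set.Icc (0:ℝ) t := hpS.1.2
    have hWle : W θ1 t1 ≤ 0 := hpS.2
    have ht1pos : 0 < t1 := by
      rcases eq_or_lt_of_le ht1mem.1 with h0 | h0
      · exfalso
        have h1 : W θ1 0 = κ θ1 0 + ε - m0 := by
          simp [hWdef]
        rw [← h0] at hWle
        have := hm0le θ1
        linarith [hWle, h1]
      · exact h0
    have hbefore : ∀ s ∈ Set.Ico (0:ℝ) t1, ∀ θ, 0 < W θ s := by
      intro s hs θ
      by_contra hle
      push_neg at hle
      obtain ⟨θ', hθ', hθ'e⟩ := (hper s).exists_mem_Ico₀ Real.two_pi_pos θ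
      have hmem : ((θ', s) : ℝ × ℝ) ∈ S := by
        refine ⟨⟨⟨hθ'.1, hθ'.2.le⟩, ⟨hs.1, (hs.2.le.trans ht1mem.2)⟩⟩, ?_⟩
        show W θ' s ≤ 0
        have hrw : κ θ s = κ θ' s := hθ'e
        simp only [hWdef] at hle ⊢
        rw [hrw] at hle
        exact hle
      exact absurd (hlb s ⟨(θ', s), hmem, rfl⟩) (not_le.mpr hs.2)
    have hatt1 : ∀ θ, 0 ≤ W θ t1 := by
      intro θ
      have hc1 : Continuous fun s => W θ s :=
        hWc.comp (continuous_const.prodMk continuous_id)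
      have htd : Filter.Tendsto (fun s => W θ s) (𝓝[<] t1) (𝓝 (W θ t1)) :=
        (hc1.tendsto t1).mono_left nhdsWithin_le_nhds
      refine ge_of_tendsto htd ?_
      filter_upwards [Ico_mem_nhdsLT_of_mem (⟨ht1pos, le_rfl⟩ : t1 ∈ Set.Ioc 0 t1)] with s hs
      exact (hbefore s hs θ).le
    have hWt1 : W θ1 t1 = 0 := le_antisymm hWle (hatt1 θ1)
    have he : (0:ℝ) < Real.exp ((Λ+1)*t1) := Real.exp_pos _
    have hkmin : ∀ θ, κ θ1 t1 ≤ κ θ t1 := by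
      intro θ
      have h1 := hatt1 θ
      simp only [hWdef] at h1 hWt1
      nlinarith [h1, hWt1, he]
    have hloc : IsLocalMin (fun θ' => κ θ' t1) θ1 := Filter.Eventually.of_forall hkmin
    have hkθ : deriv (fun θ' => κ θ' t1) θ1 = 0 := hloc.deriv_eq_zero
    have hkθθ : 0 ≤ deriv (deriv (fun θ' => κ θ' t1)) θ1 :=
      second_deriv_nonneg_of_isLocalMin (hcθ t1) hloc
    have ht1T : t1 ∈ Set.Ico (0:ℝ) T := ⟨ht1pos.le, lt_of_le_of_lt ht1mem.2 htT⟩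
    have hD : HasDerivAt (fun s => W θ1 s)
        (deriv (fun s => κ θ1 s) t1 * Real.exp ((Λ+1)*t1)
          + κ θ1 t1 * ((Λ+1) * Real.exp ((Λ+1)*t1)) + ε) t1 := by
      have h1 : HasDerivAt (fun s => κ θ1 s) (deriv (fun s => κ θ1 s) t1) t1 :=
        (hdiffT θ1 t1).hasDerivAt
      have h2 : HasDerivAt (fun s => Real.exp ((Λ+1)*s)) ((Λ+1) * Real.exp ((Λ+1)*t1)) t1 := by
        simpa [mul_comm] using ((hasDerivAt_id t1).const_mul (Λ+1)).exp
      have h3 : HasDerivAt (fun s => ε*(s+1)) ε t1 := by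
        simpa using ((hasDerivAt_id t1).add_const 1).const_mul ε
      simpa [hWdef] using ((h1.mul h2).add h3).sub_const m0
    have hDle : deriv (fun s => κ θ1 s) t1 * Real.exp ((Λ+1)*t1)
          + κ θ1 t1 * ((Λ+1) * Real.exp ((Λ+1)*t1)) + ε ≤ 0 := by
      have hsub : Set.Iio t1 ⊆ {t1}ᶜ := fun x hx => ne_of_lt hx
      have hsl := (hasDerivAt_iff_tendsto_slope.mp hD).mono_left
        (nhdsWithin_mono t1 hsub)
      refine le_of_tendsto hsl ?_
      filter_upwards [Ico_mem_nhdsLT_of_mem (⟨ht1pos, le_rfl⟩ : t1 ∈ Set.Ioc 0 t1)] with s hs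
      have h1 : 0 < W θ1 s := hbefore s hs θ1
      have hne : s - t1 ≤ 0 := by linarith [hs.2]
      rw [slope_def_field, hWt1, sub_zero]
      exact div_nonpos_of_nonneg_of_nonpos h1.le hne
    have hk := hpos θ1 t1 ht1T
    obtain ⟨hl1, hl2⟩ := hlam t1 ht1T
    rw [hPDE θ1 t1 ht1T, hkθ] at hDle
    nlinarith [mul_nonneg (mul_nonneg (by nlinarith : (0:ℝ) ≤ κ θ1 t1 ^ 2 + lam t1) hkθθ) he.le,
      mul_pos (pow_pos hk 3) he, mul_pos hk he,
      mul_nonneg (mul_nonneg (sub_nonneg.mpr hl2) hk.le) he.le]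
  have hfin : m0 ≤ κ θ0 t * Real.exp ((Λ+1)*t) := by
    by_contra hlt
    push_neg at hlt
    have htpos : (0:ℝ) < t + 1 := by linarith
    set δ := (m0 - κ θ0 t * Real.exp ((Λ+1)*t)) / (2*(t+1)) with hδdef
    have hδ : 0 < δ := by
      apply div_pos (by linarith) (by linarith)
    have hkey := key δ hδ t ⟨ht0, le_rfl⟩ θ0
    have hδt : δ * (t+1) = (m0 - κ θ0 t * Real.exp ((Λ+1)*t))/2 := by
      rw [hδdef]; field_simp
    linarith
  have hep : (0:ℝ) < Real.exp (-(Λ+1)*t) := Real.exp_pos _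
  have heq : Real.exp ((Λ+1)*t) * Real.exp (-(Λ+1)*t) = 1 := by
    rw [← Real.exp_add]
    ring_nf
    exact Real.exp_zero
  have h3 : κ θ0 t * (Real.exp ((Λ+1)*t) * Real.exp (-(Λ+1)*t)) = κ θ0 t := by
    rw [heq, mul_one]
  nlinarith [mul_le_mul_of_nonneg_right hfin hep.le, h3]
end

section
/- For every 2π-periodic C¹ function f with ∫₀^{2π} f dθ = 0, one has ‖f‖_{L²} ≤ (3/2)^{1/3} ‖f'‖_{L²}^{1/3} ‖f‖_{L¹}^{2/3}. -/
/-!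
Let `c` be a zero of `f` (it exists because `f` has mean zero). On the period `[c, c + 2π]`,
integrating `(f²)' = 2 f f'` from `c` to `θ` and from `θ` to `c + 2π` gives
`f(θ)² ≤ M := ∫ |f| |f'|`, and Cauchy–Schwarz gives `M ≤ ‖f‖₂ ‖f'‖₂`. Hence
`‖f‖₂² ≤ ‖f‖_∞ ‖f‖₁ ≤ (‖f‖₂ ‖f'‖₂)^{1/2} ‖f‖₁`, i.e. `‖f‖₂³ ≤ ‖f'‖₂ ‖f‖₁²`.
This is the claim with the constant `1` in place of `(3/2)^{1/3}`.
-/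

open Real MeasureTheory Set

theorem Function.Periodic.deriv {𝕜 F : Type*} [NontriviallyNormedField 𝕜] [NormedAddCommGroup F]
    [NormedSpace 𝕜 F] {f : 𝕜 → F} {T : 𝕜} (h : Function.Periodic f T) :
    Function.Periodic (deriv f) T := fun x => by
  rw [← deriv_comp_add_const, show (fun y => f (y + T)) = f from funext h]

theorem exists_eq_zero_of_intervalIntegral_eq_zero {f : ℝ → ℝ} {a b : ℝ} (hab : a ≠ b)
    (hf : ContinuousOn f (uIcc a b)) (h : ∫ x in a..b, f x = 0) : ∃ c ∈ uIoo a b, f c = 0 := by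
  simpa [interval_average_eq_div, h] using exists_eq_interval_average hab hf

theorem intervalIntegral.integral_abs_mul_abs_le_sqrt_mul_sqrt {u v : ℝ → ℝ} (hu : Continuous u)
    (hv : Continuous v) {a b : ℝ} (hab : a ≤ b) :
    ∫ x in a..b, |u x| * |v x| ≤ √(∫ x in a..b, u x ^ 2) * √(∫ x in a..b, v x ^ 2) := by
  have memLp : ∀ w : ℝ → ℝ, Continuous w →
      MemLp (fun x => |w x|) (ENNReal.ofReal 2) (volume.restrict (Ioc a b)) := fun w hw => by
    rw [ENNReal.ofReal_ofNat, memLp_two_iff_integrable_sq hw.abs.aestronglyMeasurable]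
    simp only [sq_abs]
    exact (hw.pow 2).integrableOn_Ioc
  have hL2 : ∀ w : ℝ → ℝ, ∫ x in Ioc a b, |w x| ^ (2 : ℝ) = ∫ x in a..b, w x ^ 2 := fun w => by
    simp only [intervalIntegral.integral_of_le hab, rpow_two, sq_abs]
  have := integral_mul_le_Lp_mul_Lq_of_nonneg HolderConjugate.two_two
    (.of_forall fun x => abs_nonneg (u x)) (.of_forall fun x => abs_nonneg (v x))
    (memLp u hu) (memLp v hv)
  rwa [hL2, hL2, ← intervalIntegral.integral_of_le hab, ← sqrt_eq_rpow, ← sqrt_eq_rpow] at this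

theorem abs_sq_sub_sq_le_two_mul_integral_abs_mul_abs_deriv {f : ℝ → ℝ} (hf : ContDiff ℝ 1 f)
    {a b : ℝ} (hab : a ≤ b) :
    |f b ^ 2 - f a ^ 2| ≤ 2 * ∫ x in a..b, |f x| * |deriv f x| := by
  have hf' : Continuous (deriv f) := hf.continuous_deriv le_rfl
  have ftc : f b ^ 2 - f a ^ 2 = ∫ x in a..b, 2 * f x * deriv f x := by
    refine (intervalIntegral.integral_eq_sub_of_hasDerivAt (f := fun x => f x ^ 2)
      (f' := fun x => 2 * f x * deriv f x) (fun x _ => ?_)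
      ((continuous_const.mul hf.continuous).mul hf' |>.intervalIntegrable a b)).symm
    simpa using (hf.differentiable one_ne_zero x).hasDerivAt.fun_pow 2
  calc |f b ^ 2 - f a ^ 2| ≤ ∫ x in a..b, |2 * f x * deriv f x| :=
        ftc ▸ intervalIntegral.abs_integral_le_integral_abs hab
    _ = 2 * ∫ x in a..b, |f x| * |deriv f x| := by
        simp only [abs_mul, abs_two, mul_assoc, intervalIntegral.integral_const_mul]

theorem sq_le_integral_abs_mul_abs_deriv_of_eq_zero {f : ℝ → ℝ} (hf : ContDiff ℝ 1 f) {a b x : ℝ}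
    (ha : f a = 0) (hb : f b = 0) (hx : x ∈ Icc a b) :
    f x ^ 2 ≤ ∫ t in a..b, |f t| * |deriv f t| := by
  have hint : ∀ p q : ℝ, IntervalIntegrable (fun t => |f t| * |deriv f t|) volume p q :=
    fun p q => (hf.continuous.abs.mul (hf.continuous_deriv le_rfl).abs).intervalIntegrable p q
  have left := abs_sq_sub_sq_le_two_mul_integral_abs_mul_abs_deriv hf hx.1
  have right := abs_sq_sub_sq_le_two_mul_integral_abs_mul_abs_deriv hf hx.2
  rw [ha, zero_pow two_ne_zero, sub_zero, abs_sq] at left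
  rw [hb, zero_pow two_ne_zero, zero_sub, abs_neg, abs_sq] at right
  rw [← intervalIntegral.integral_add_adjacent_intervals (hint a x) (hint x b)]
  linarith

theorem sq_le_integral_abs_mul_abs_deriv_of_periodic {f : ℝ → ℝ} {T c : ℝ}
    (hper : Function.Periodic f T) (hf : ContDiff ℝ 1 f) (hT : 0 < T) (hc : f c = 0) (x : ℝ) :
    f x ^ 2 ≤ ∫ t in (0 : ℝ)..T, |f t| * |deriv f t| := by
  obtain ⟨y, hy, hxy⟩ := hper.exists_mem_Ico hT x c
  have hperg : Function.Periodic (fun t => |f t| * |deriv f t|) T :=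
    (hper.comp abs).mul (hper.deriv.comp abs)
  rw [hxy, ← zero_add T, ← hperg.intervalIntegral_add_eq c 0]
  exact sq_le_integral_abs_mul_abs_deriv_of_eq_zero hf hc (by rw [hper c, hc])
    (Ico_subset_Icc_self hy)

theorem intervalIntegral.integral_sq_le_mul_integral_abs {f : ℝ → ℝ} {a b K : ℝ} (hf : Continuous f)
    (hab : a ≤ b) (hK : ∀ x ∈ Icc a b, |f x| ≤ K) :
    ∫ x in a..b, f x ^ 2 ≤ K * ∫ x in a..b, |f x| := by
  rw [← intervalIntegral.integral_const_mul]
  refine intervalIntegral.integral_mono_on hab ((hf.pow 2).intervalIntegrable a b)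
    ((continuous_const.mul hf.abs).intervalIntegrable a b) fun x hx => ?_
  rw [← sq_abs, sq, mul_comm K]
  exact mul_le_mul_of_nonneg_left (hK x hx) (abs_nonneg _)

theorem le_rpow_mul_rpow_of_sq_le_sqrt_mul {A B C : ℝ} (hA : 0 ≤ A) (hB : 0 ≤ B) (hC : 0 ≤ C)
    (h : A ^ 2 ≤ √(A * B) * C) : A ≤ B ^ (1 / 3 : ℝ) * C ^ (2 / 3 : ℝ) := by
  have cube : A ^ 3 ≤ B * C ^ 2 := by
    rcases hA.eq_or_lt with rfl | hA
    · rw [zero_pow three_ne_zero]; positivity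
    have := pow_le_pow_left₀ (by positivity) h 2
    rw [mul_pow, sq_sqrt (by positivity)] at this
    exact le_of_mul_le_mul_left (by linear_combination this) hA
  calc A = (A ^ 3) ^ (1 / 3 : ℝ) := by
        rw [one_div]; exact_mod_cast (pow_rpow_inv_natCast hA three_ne_zero).symm
    _ ≤ (B * C ^ 2) ^ (1 / 3 : ℝ) := by gcongr
    _ = B ^ (1 / 3 : ℝ) * C ^ (2 / 3 : ℝ) := by
        rw [mul_rpow hB (by positivity), ← rpow_natCast_mul hC]
        norm_num [div_eq_mul_inv]

theorem stmt_7 (f : ℝ → ℝ)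
    (hf : ContDiff ℝ 1 f) (hper : Function.Periodic f (2 * π))
    (hmean : ∫ θ in (0:ℝ)..(2 * π), f θ = 0) :
    Real.sqrt (∫ θ in (0:ℝ)..(2 * π), f θ ^ 2) ≤
      ((3:ℝ) / 2) ^ ((1:ℝ)/3) *
        (Real.sqrt (∫ θ in (0:ℝ)..(2 * π), (deriv f θ) ^ 2)) ^ ((1:ℝ)/3) *
        (∫ θ in (0:ℝ)..(2 * π), |f θ|) ^ ((2:ℝ)/3) := by
  obtain ⟨c, -, hc⟩ :=
    exists_eq_zero_of_intervalIntegral_eq_zero two_pi_pos.ne hf.continuous.continuousOn hmean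
  set M := ∫ θ in (0:ℝ)..(2 * π), |f θ| * |deriv f θ|
  have hsup : ∀ θ ∈ Icc 0 (2 * π), |f θ| ≤ √M := fun θ _ =>
    abs_le_sqrt (sq_le_integral_abs_mul_abs_deriv_of_periodic hper hf two_pi_pos hc θ)
  have hL2 := intervalIntegral.integral_sq_le_mul_integral_abs hf.continuous two_pi_pos.le hsup
  have hM : M ≤ _ := intervalIntegral.integral_abs_mul_abs_le_sqrt_mul_sqrt hf.continuous
    (hf.continuous_deriv le_rfl) two_pi_pos.le
  have hL1 : 0 ≤ ∫ θ in (0:ℝ)..(2 * π), |f θ| :=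
    intervalIntegral.integral_nonneg two_pi_pos.le fun θ _ => abs_nonneg (f θ)
  have hnorm := le_rpow_mul_rpow_of_sq_le_sqrt_mul (sqrt_nonneg _) (sqrt_nonneg _) hL1 <| by
    rw [sq_sqrt (intervalIntegral.integral_nonneg two_pi_pos.le fun θ _ => sq_nonneg (f θ))]
    exact hL2.trans (mul_le_mul_of_nonneg_right (sqrt_le_sqrt hM) hL1)
  rw [mul_assoc]
  exact hnorm.trans <|
    le_mul_of_one_le_left (by positivity) (one_le_rpow (by norm_num) (by norm_num))
end

section
/- Let F : [0, t₀) → ℝ be C¹ with F(0) = 0, F' ≥ 0, and √(F'(t)) ≤ m₀F(t) + c for constants m₀, c > 0, where t₀ = 1/(c·m₀). Then F(t) ≤ c²t/(1 − m₀ c t) for all t ∈ [0, t₀). -/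
/-!
Set `u = m₀ F + c`, so that `u(0) = c`, `u > 0` (as `F` is nondecreasing from `F(0) = 0`), and
the hypothesis `√F' ≤ u` becomes the Riccati inequality `u' ≤ m₀ u²`. Then `s ↦ m₀ s + 1 / u(s)`
has nonnegative derivative, hence `1 / u(t) ≥ 1 / c - m₀ t`, which rearranges to the bound.
-/

open Real Set

section Riccati

variable {u u' : ℝ → ℝ} {D : Set ℝ} {k : ℝ}

theorem monotoneOn_of_forall_hasDerivAt_nonneg (hD : Convex ℝ D)
    (hu : ∀ x ∈ D, HasDerivAt u (u' x) x) (hu' : ∀ x ∈ D, 0 ≤ u' x) : MonotoneOn u D :=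
  monotoneOn_of_hasDerivWithinAt_nonneg hD
    (fun x hx => (hu x hx).continuousAt.continuousWithinAt)
    (fun x hx => (hu x (interior_subset hx)).hasDerivWithinAt)
    (fun x hx => hu' x (interior_subset hx))

theorem monotoneOn_mul_add_inv_of_deriv_le_mul_sq (hD : Convex ℝ D)
    (hu : ∀ x ∈ D, HasDerivAt u (u' x) x) (hpos : ∀ x ∈ D, 0 < u x)
    (hle : ∀ x ∈ D, u' x ≤ k * u x ^ 2) :
    MonotoneOn (fun x => k * x + (u x)⁻¹) D := by
  have hderiv : ∀ x ∈ D, HasDerivAt (fun x => k * x + (u x)⁻¹)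
      (k - u' x / u x ^ 2) x := fun x hx => by
    simpa only [sub_eq_add_neg, neg_div] using
      (hasDerivAt_const_mul k).fun_add ((hu x hx).fun_inv (hpos x hx).ne')
  refine monotoneOn_of_forall_hasDerivAt_nonneg hD hderiv fun x hx => ?_
  rw [sub_nonneg, div_le_iff₀ (pow_pos (hpos x hx) 2)]
  exact hle x hx

theorem inv_sub_mul_le_inv_of_deriv_le_mul_sq (hD : Convex ℝ D)
    (hu : ∀ x ∈ D, HasDerivAt u (u' x) x) (hpos : ∀ x ∈ D, 0 < u x)
    (hle : ∀ x ∈ D, u' x ≤ k * u x ^ 2) {a b : ℝ} (ha : a ∈ D) (hb : b ∈ D) (hab : a ≤ b) :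
    (u a)⁻¹ - k * (b - a) ≤ (u b)⁻¹ := by
  have := monotoneOn_mul_add_inv_of_deriv_le_mul_sq hD hu hpos hle ha hb hab
  simp only at this
  linarith

end Riccati

theorem stmt_9 (m₀ c : ℝ) (hm : 0 < m₀) (hc : 0 < c)
    (F F' : ℝ → ℝ)
    (hderiv : ∀ t ∈ Set.Ico (0:ℝ) (1 / (c * m₀)), HasDerivAt F (F' t) t)
    (hF0 : F 0 = 0)
    (hmono : ∀ t ∈ Set.Ico (0:ℝ) (1 / (c * m₀)), 0 ≤ F' t)
    (hineq : ∀ t ∈ Set.Ico (0:ℝ) (1 / (c * m₀)),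
      Real.sqrt (F' t) ≤ m₀ * F t + c) :
    ∀ t ∈ Set.Ico (0:ℝ) (1 / (c * m₀)),
      F t ≤ c ^ 2 * t / (1 - m₀ * c * t) := by
  set I := Ico (0:ℝ) (1 / (c * m₀))
  have h0 : (0:ℝ) ∈ I := left_mem_Ico.2 (by positivity)
  have hF_nonneg : ∀ s ∈ I, 0 ≤ F s := fun s hs =>
    hF0 ▸ monotoneOn_of_forall_hasDerivAt_nonneg (convex_Ico _ _) hderiv hmono h0 hs hs.1
  have hriccati : ∀ t ∈ I, c⁻¹ - m₀ * t ≤ (m₀ * F t + c)⁻¹ := fun t ht => by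
    simpa [hF0] using inv_sub_mul_le_inv_of_deriv_le_mul_sq (u := fun s => m₀ * F s + c)
      (u' := fun s => m₀ * F' s) (convex_Ico _ _)
      (fun s hs => ((hderiv s hs).const_mul m₀).add_const c)
      (fun s hs => by have := hF_nonneg s hs; positivity)
      (fun s hs => mul_le_mul_of_nonneg_left (sqrt_le_iff.1 (hineq s hs)).2 hm.le) h0 ht ht.1
  intro t ht
  have hden : 0 < 1 - m₀ * c * t := by
    have := (lt_div_iff₀ (by positivity)).1 ht.2
    linarith
  have hu : 0 < m₀ * F t + c := by have := hF_nonneg t ht; positivity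
  have hbound : (m₀ * F t + c) * (1 - m₀ * c * t) ≤ c := by
    have := mul_le_mul_of_nonneg_left (hriccati t ht) (mul_pos hc hu).le
    field_simp at this
    linarith
  rw [le_div_iff₀ hden]
  nlinarith
end

section
/- Suppose a nonnegative continuous function G : [0, t₀/2] → ℝ satisfies G(t) ≤ m₀F(t) + c where F(t) = ∫₀^t G(τ)² dτ, m₀, c > 0, and t₀ = 1/(cm₀). Then G(t) ≤ (M(t)+1)c with M(t) = 1/(1 − cm₀t); in particular G(t) ≤ 3c for t ∈ [0, t₀/2]. -/
/-!
Put `H t = m₀ ∫₀ᵗ G² + c`. Then `0 ≤ G ≤ H` gives `H' = m₀ G² ≤ m₀ H²`, i.e. `(1/H)' ≥ -m₀`, so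
`1/H(t) ≥ 1/c - m₀ t` and `G(t) ≤ H(t) ≤ c / (1 - c m₀ t)`. On `[0, t₀/2]` the denominator is at
least `1/2`.
-/

open Set MeasureTheory

theorem inv_sub_mul_le_inv_of_hasDerivAt_le_mul_sq {H H' : ℝ → ℝ} {m a b : ℝ}
    (hH : ContinuousOn H (Icc a b)) (hpos : ∀ x ∈ Icc a b, 0 < H x)
    (hderiv : ∀ x ∈ Ioo a b, HasDerivAt H (H' x) x)
    (hle : ∀ x ∈ Ioo a b, H' x ≤ m * H x ^ 2) :
    ∀ t ∈ Icc a b, (H a)⁻¹ - m * (t - a) ≤ (H t)⁻¹ := by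
  -- `(1/H)' = -H'/H² ≥ -m`
  have hmono : MonotoneOn (fun t => (H t)⁻¹ + m * t) (Icc a b) := by
    refine monotoneOn_of_hasDerivWithinAt_nonneg (convex_Icc a b)
      ((hH.inv₀ fun x hx => (hpos x hx).ne').add (continuousOn_const.mul continuousOn_id))
      (fun x hx => ?_) (fun x hx => ?_) (f' := fun x => -H' x / H x ^ 2 + m)
    · rw [interior_Icc] at hx ⊢
      exact (((hderiv x hx).inv (hpos x (Ioo_subset_Icc_self hx)).ne').add
        ((hasDerivAt_id x).const_mul m) |>.congr_deriv (by simp)).hasDerivWithinAt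
    · rw [interior_Icc] at hx
      have hHx : 0 < H x ^ 2 := pow_pos (hpos x (Ioo_subset_Icc_self hx)) 2
      have : H' x / H x ^ 2 ≤ m := (div_le_iff₀ hHx).2 (hle x hx)
      rw [neg_div]
      linarith
  intro t ht
  have := hmono (left_mem_Icc.2 (ht.1.trans ht.2)) ht ht.1
  linarith

theorem le_div_one_sub_of_le_mul_integral_sq_add {G : ℝ → ℝ} {m c a b : ℝ} (hm : 0 ≤ m)
    (hc : 0 < c) (hG : ContinuousOn G (Icc a b)) (hG0 : ∀ t ∈ Icc a b, 0 ≤ G t)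
    (hineq : ∀ t ∈ Icc a b, G t ≤ m * (∫ τ in a..t, G τ ^ 2) + c) :
    ∀ t ∈ Icc a b, c * m * (t - a) < 1 → G t ≤ c / (1 - c * m * (t - a)) := by
  intro t ht hsmall
  have hab : a ≤ b := ht.1.trans ht.2
  set H : ℝ → ℝ := fun s => m * (∫ τ in a..s, G τ ^ 2) + c with hH
  have hG2 : ContinuousOn (fun τ => G τ ^ 2) (Icc a b) := hG.pow 2
  have hcH : ∀ s ∈ Icc a b, c ≤ H s := fun s hs =>
    le_add_of_nonneg_left <| mul_nonneg hm <|
      intervalIntegral.integral_nonneg hs.1 fun _ _ => sq_nonneg _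
  have hHcont : ContinuousOn H (Icc a b) := by
    have := intervalIntegral.continuousOn_primitive_interval (μ := volume)
      (a := a) (b := b) (by rw [uIcc_of_le hab]; exact hG2.integrableOn_Icc)
    rw [uIcc_of_le hab] at this
    exact (continuousOn_const.mul this).add continuousOn_const
  have hHderiv : ∀ x ∈ Ioo a b, HasDerivAt H (m * G x ^ 2) x := fun x hx =>
    ((intervalIntegral.integral_hasDerivAt_right
      ((hG2.mono (Icc_subset_Icc_right hx.2.le)).intervalIntegrable_of_Icc hx.1.le)
      ((hG2.mono Ioo_subset_Icc_self).stronglyMeasurableAtFilter isOpen_Ioo x hx)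
      (hG2.continuousAt (Icc_mem_nhds hx.1 hx.2))).const_mul m).add_const c
  have hGH_sq : ∀ x ∈ Ioo a b, m * G x ^ 2 ≤ m * H x ^ 2 := fun x hx =>
    have hx' := Ioo_subset_Icc_self hx
    mul_le_mul_of_nonneg_left (pow_le_pow_left₀ (hG0 x hx') (hineq x hx') 2) hm
  have hHa : H a = c := by simp [hH]
  have hriccati := inv_sub_mul_le_inv_of_hasDerivAt_le_mul_sq hHcont
    (fun s hs => hc.trans_le (hcH s hs)) hHderiv hGH_sq t ht
  rw [hHa] at hriccati
  have hfactor : c⁻¹ - m * (t - a) = (1 - c * m * (t - a)) / c := by field_simp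
  have hpos : 0 < c⁻¹ - m * (t - a) := hfactor ▸ div_pos (sub_pos.2 hsmall) hc
  calc G t ≤ H t := hineq t ht
    _ ≤ (c⁻¹ - m * (t - a))⁻¹ := (le_inv_comm₀ hpos (hc.trans_le (hcH t ht))).1 hriccati
    _ = c / (1 - c * m * (t - a)) := by rw [hfactor, inv_div]

theorem stmt_10 (m₀ c : ℝ) (hm : 0 < m₀) (hc : 0 < c)
    (G : ℝ → ℝ)
    (hcont : ContinuousOn G (Set.Icc 0 (1 / (c * m₀) / 2)))
    (hnonneg : ∀ t ∈ Set.Icc (0:ℝ) (1 / (c * m₀) / 2), 0 ≤ G t)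
    (hineq : ∀ t ∈ Set.Icc (0:ℝ) (1 / (c * m₀) / 2),
      G t ≤ m₀ * (∫ τ in (0:ℝ)..t, G τ ^ 2) + c) :
    ∀ t ∈ Set.Icc (0:ℝ) (1 / (c * m₀) / 2),
      G t ≤ (1 / (1 - c * m₀ * t) + 1) * c ∧ G t ≤ 3 * c := by
  intro t ht
  have hcm : 0 < c * m₀ := mul_pos hc hm
  have hhalf : c * m₀ * t ≤ 1 / 2 :=
    calc c * m₀ * t ≤ c * m₀ * (1 / (c * m₀) / 2) := mul_le_mul_of_nonneg_left ht.2 hcm.le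
      _ = 1 / 2 := by field_simp
  have hG := le_div_one_sub_of_le_mul_integral_sq_add hm.le hc hcont hnonneg hineq t ht
    (by linarith)
  rw [sub_zero, ← one_div_mul_eq_div] at hG
  have hM : 1 / (1 - c * m₀ * t) ≤ 2 := by
    rw [div_le_iff₀ (by linarith)]
    linarith
  exact ⟨by nlinarith, by nlinarith⟩
end
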